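/- Fix e∈[0,1), e_J∈[0,1), Θ∈ℝ, i∈(0,π/2), G>0, and define Ā₂(a), B̄₂(a), C̄₂(a) as in the context. Then there exists a₀>0 such that for all a with 0<a<a₀ the determinant D₂(a) = Ā₂(a)·C̄₂(a) − B̄₂(a)² is strictly positive. (The leading term is (1 + 3e² − 4e⁴)(1 + cos i)²·a⁴/(16(1−e_J²)³G²), and 1 + 3e² − 4e⁴ = (1−e²)(1+4e²) > 0.) -/
import Mathlib


open Real

/-- Averaged coefficient `Ā₂` of `p₃²` in the general inner case, `ω+Ω=Θ`, inclination `i`. -/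
noncomputable def Abar2 (e eJ Θ i G a : ℝ) : ℝ :=
  Real.sin i ^ 2 * (1 + 4 * e ^ 2 - 5 * e ^ 2 * Real.cos Θ ^ 2) * a ^ 2 /
      (4 * G * (1 - eJ ^ 2) ^ ((3:ℝ) / 2) * (1 - Real.cos i))
    - 15 * Real.cos Θ * eJ * e * (3 * e ^ 2 + 4) * a ^ 3 /
      (16 * G * (1 - Real.cos i) * (1 - eJ ^ 2) ^ ((5:ℝ) / 2))

/-- Averaged coefficient `B̄₂` of `p₃q₃` in the general inner case, `ω+Ω=Θ`, inclination `i`. -/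
noncomputable def Bbar2 (e eJ Θ i G a : ℝ) : ℝ :=
  5 * Real.sin i ^ 2 * Real.cos Θ * Real.sin Θ * e ^ 2 * a ^ 2 /
      (4 * G * (1 - eJ ^ 2) ^ ((3:ℝ) / 2) * (1 - Real.cos i))
    + 15 * Real.sin Θ * eJ * e * (3 * e ^ 2 + 4) * a ^ 3 /
      (32 * G * (1 - eJ ^ 2) ^ ((5:ℝ) / 2))

/-- Averaged coefficient `C̄₂` of `q₃²` in the general inner case, `ω+Ω=Θ`, inclination `i`. -/
noncomputable def Cbar2 (e eJ Θ i G a : ℝ) : ℝ :=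
  Real.sin i ^ 2 * (5 * e ^ 2 * Real.cos Θ ^ 2 - e ^ 2 + 1) * a ^ 2 /
      (4 * G * (1 - eJ ^ 2) ^ ((3:ℝ) / 2) * (1 - Real.cos i))
    - 15 * Real.cos i * Real.cos Θ * eJ * e * (3 * e ^ 2 + 4) * a ^ 3 /
      (16 * G * (1 - Real.cos i) * (1 - eJ ^ 2) ^ ((5:ℝ) / 2))

lemma det_key_ineq (e C S : ℝ) (he0 : 0 ≤ e) (he1 : e < 1) (hS2 : S ^ 2 = 1 - C ^ 2) :
    0 < (1 + 4 * e ^ 2 - 5 * e ^ 2 * C ^ 2) * (5 * e ^ 2 * C ^ 2 - e ^ 2 + 1)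
        - 25 * C ^ 2 * S ^ 2 * e ^ 4 := by
  have he2 : e ^ 2 < 1 := by nlinarith
  have hpos : 0 < (1 - e ^ 2) * (1 + 4 * e ^ 2) := by
    apply mul_pos <;> nlinarith [sq_nonneg e]
  rw [hS2]; nlinarith [hpos]

set_option maxHeartbeats 1000000 in
theorem determinant_pos_general_inner_case
    (e eJ Θ i G : ℝ) (he0 : 0 ≤ e) (he1 : e < 1) (heJ0 : 0 ≤ eJ) (heJ1 : eJ < 1)
    (hi : i ∈ Set.Ioo 0 (Real.pi / 2)) (hG : 0 < G) :
    ∃ a₀ > 0, ∀ a : ℝ, 0 < a → a < a₀ →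
      0 < Abar2 e eJ Θ i G a * Cbar2 e eJ Θ i G a - Bbar2 e eJ Θ i G a ^ 2 := by

  obtain ⟨hi0, hi2⟩ := hi
  have hpi : i < Real.pi := lt_trans hi2 (by linarith [Real.pi_pos])
  have hs : 0 < Real.sin i := Real.sin_pos_of_pos_of_lt_pi hi0 hpi
  have hc0 : 0 < Real.cos i := Real.cos_pos_of_mem_Ioo ⟨by linarith [Real.pi_pos], hi2⟩
  have hc1 : Real.cos i < 1 := by
    nlinarith [Real.sin_sq_add_cos_sq i]
  have hcm : 0 < 1 - Real.cos i := by linarith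
  have heJsq : 0 < 1 - eJ ^ 2 := by nlinarith
  have hP : 0 < (1 - eJ ^ 2) ^ ((3:ℝ)/2) := Real.rpow_pos_of_pos heJsq _
  have hQ : 0 < (1 - eJ ^ 2) ^ ((5:ℝ)/2) := Real.rpow_pos_of_pos heJsq _
  set s := Real.sin i with hsdef
  set c := Real.cos i with hcdef
  set C := Real.cos Θ with hCdef
  set S := Real.sin Θ with hSdef
  set P := (1 - eJ ^ 2) ^ ((3:ℝ)/2) with hPdef
  set Q := (1 - eJ ^ 2) ^ ((5:ℝ)/2) with hQdef
  set F : ℝ → ℝ := fun a =>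
    (s ^ 2 * (1 + 4 * e ^ 2 - 5 * e ^ 2 * C ^ 2) / (4 * G * P * (1 - c))
        - 15 * C * eJ * e * (3 * e ^ 2 + 4) * a / (16 * G * (1 - c) * Q)) *
      (s ^ 2 * (5 * e ^ 2 * C ^ 2 - e ^ 2 + 1) / (4 * G * P * (1 - c))
        - 15 * c * C * eJ * e * (3 * e ^ 2 + 4) * a / (16 * G * (1 - c) * Q))
    - (5 * s ^ 2 * C * S * e ^ 2 / (4 * G * P * (1 - c))
        + 15 * S * eJ * e * (3 * e ^ 2 + 4) * a / (32 * G * Q)) ^ 2 with hFdef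
  have hfac : ∀ a : ℝ, Abar2 e eJ Θ i G a * Cbar2 e eJ Θ i G a - Bbar2 e eJ Θ i G a ^ 2
      = a ^ 4 * F a := by
    intro a
    simp only [Abar2, Bbar2, Cbar2, hFdef, ← hsdef, ← hcdef, ← hCdef, ← hSdef, ← hPdef, ← hQdef]
    ring
  have hF0 : 0 < F 0 := by
    have h1 : F 0 = (s ^ 2 / (4 * G * P * (1 - c))) ^ 2 *
        ((1 + 4 * e ^ 2 - 5 * e ^ 2 * C ^ 2) * (5 * e ^ 2 * C ^ 2 - e ^ 2 + 1)
          - 25 * C ^ 2 * S ^ 2 * e ^ 4) := by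
      simp only [hFdef]
      ring
    rw [h1]
    have hS2 : S ^ 2 = 1 - C ^ 2 := by
      rw [hSdef, hCdef]; exact Real.sin_sq Θ
    have h2 := det_key_ineq e C S he0 he1 hS2
    have h3 : 0 < s ^ 2 / (4 * G * P * (1 - c)) := by
      apply div_pos (by positivity)
      have : 0 < 4 * G * P := by positivity
      exact mul_pos this hcm
    exact mul_pos (pow_pos h3 2) h2
  have hcont : Continuous F := by
    simp only [hFdef]
    fun_prop
  have hev : ∀ᶠ a in nhds (0:ℝ), 0 < F a :=
    (hcont.continuousAt (x := 0)).eventually (eventually_gt_nhds hF0)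
  rw [Metric.eventually_nhds_iff] at hev
  obtain ⟨ε, hε, hball⟩ := hev
  refine ⟨ε, hε, fun a ha haε => ?_⟩
  have hFa : 0 < F a := by
    apply hball
    rw [Real.dist_eq]
    rw [sub_zero, abs_of_pos ha]
    exact haε
  rw [hfac a]
  exact mul_pos (pow_pos ha 4) hFa
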